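/- arXiv:1309.6760 — 3 statements merged into one kernel-verified Lean document; each statement's English description precedes it below -/
import Mathlib

section
/- Let (M, ω) be a symplectic manifold with a Hamiltonian G-action with momentum map μ. Let {(−,−)_m}_{m∈M} be a smooth family of inner products on 𝔤*, and define ℋ(m) = ‖μ(m)‖²_m. Let d₁ℋ be the partial derivative of the function (m, m') ↦ ‖μ(m)‖²_{m'} in the first variable, and let X₁^ℋ be the vector field defined by d₁ℋ = ω(X₁^ℋ, −). Let μ* : M → 𝔤 be defined by (μ(m), ξ)_m = ⟨ξ, μ*(m)⟩ for all ξ ∈ 𝔤*, and V_μ the vector field V_μ(m) = (μ*(m))^M_m. Then X₁^ℋ = 2 V_μ. -/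
/-! Freezing the inner product at `m`, the differential of `m' ↦ (μ(m'), μ(m'))_m` at `m` is
`2 (μ(m), dμ(−))_m = 2 ⟨dμ(−), μ*(m)⟩` by symmetry and the definition of `μ*`. The momentum map
condition for `X = μ*(m)` identifies the right-hand side with `2 ω(V_μ(m), −)`, and
nondegeneracy of `ω` gives `X₁^ℋ(m) = 2 V_μ(m)`. -/

open Manifold

theorem ContinuousLinearMap.hasFDerivAt_diag_of_symm {𝕜 : Type*} [NontriviallyNormedField 𝕜]
    {F : Type*} [NormedAddCommGroup F] [NormedSpace 𝕜 F]
    {G : Type*} [NormedAddCommGroup G] [NormedSpace 𝕜 G]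
    (B : F →L[𝕜] F →L[𝕜] G) (hB : ∀ ξ η, B ξ η = B η ξ) (x : F) :
    HasFDerivAt (fun w => B w w) ((2 : 𝕜) • B x) x := by
  convert B.hasFDerivAt.clm_apply (hasFDerivAt_id x) using 1
  · rfl
  · ext w
    simp [hB w x, two_smul]

section MFDerivBilinear

variable {𝕜 : Type*} [NontriviallyNormedField 𝕜]
  {E : Type*} [NormedAddCommGroup E] [NormedSpace 𝕜 E]
  {H : Type*} [TopologicalSpace H] {I : ModelWithCorners 𝕜 E H}
  {M : Type*} [TopologicalSpace M] [ChartedSpace H M]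
  {F : Type*} [NormedAddCommGroup F] [NormedSpace 𝕜 F]
  {G : Type*} [NormedAddCommGroup G] [NormedSpace 𝕜 G]
  {f : M → F} {m : M}

theorem mfderiv_continuousLinearMap_comp (L : F →L[𝕜] G)
    (hf : MDifferentiableAt I 𝓘(𝕜, F) f m) :
    mfderiv I 𝓘(𝕜, G) (fun m' => L (f m')) m = L ∘L mfderiv I 𝓘(𝕜, F) f m :=
  (L.hasMFDerivAt.comp m hf.hasMFDerivAt).mfderiv

theorem mfderiv_bilinear_diag_of_symm (B : F →L[𝕜] F →L[𝕜] G) (hB : ∀ ξ η, B ξ η = B η ξ)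
    (hf : MDifferentiableAt I 𝓘(𝕜, F) f m) :
    mfderiv I 𝓘(𝕜, G) (fun m' => B (f m') (f m')) m
      = (2 : 𝕜) • B (f m) ∘L mfderiv I 𝓘(𝕜, F) f m :=
  ((B.hasFDerivAt_diag_of_symm hB (f m)).hasMFDerivAt.comp m hf.hasMFDerivAt).mfderiv.trans
    (ContinuousLinearMap.smul_comp _ _ _)

end MFDerivBilinear

theorem ContinuousLinearMap.eq_smul_of_forall_apply_eq_mul_of_nondegenerate
    {𝕜 : Type*} [NormedField 𝕜] {V : Type*} [AddCommGroup V] [Module 𝕜 V] [TopologicalSpace V]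
    {ω : V →L[𝕜] V →L[𝕜] 𝕜} (hω : ∀ v, (∀ w, ω v w = 0) → v = 0) {x y : V} {c : 𝕜}
    (h : ∀ w, ω x w = c * ω y w) : x = c • y :=
  sub_eq_zero.1 <| hω _ fun w => by simp [h]

theorem statement2_general
    {E : Type*} [NormedAddCommGroup E] [NormedSpace ℝ E]
    {H : Type*} [TopologicalSpace H] (I : ModelWithCorners ℝ E H)
    {M : Type*} [TopologicalSpace M] [ChartedSpace H M]
    {E' : Type*} [NormedAddCommGroup E'] [NormedSpace ℝ E']
    {H' : Type*} [TopologicalSpace H'] (I' : ModelWithCorners ℝ E' H')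
    {G : Type*} [TopologicalSpace G] [ChartedSpace H' G] [Group G]
    [MulAction G M]
    -- 𝔤* with its duality pairing with 𝔤 = E'
    {W : Type*} [NormedAddCommGroup W] [NormedSpace ℝ W]
    (pair : W →L[ℝ] E' →L[ℝ] ℝ)
    -- the symplectic form
    (ω : ∀ m : M, TangentSpace I m →L[ℝ] TangentSpace I m →L[ℝ] ℝ)
    (hnondeg : ∀ (m : M) (v : TangentSpace I m), (∀ w, ω m v w = 0) → v = 0)
    -- the momentum map and the momentum map condition dμ_X = ω(X^M, −)
    (μ : M → W)
    (hμsmooth : ContMDiff I 𝓘(ℝ, W) (⊤ : ℕ∞) μ)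
    (hmom : ∀ (X : E') (m : M) (v : TangentSpace I m),
      mfderiv I 𝓘(ℝ, ℝ) (fun m' => pair (μ m') X) m v
        = ω m (mfderiv I' I (fun g : G => g • m) 1 X) v)
    -- a smooth family of inner products on 𝔤* = W, parametrized by M
    (inn : M → (W →L[ℝ] W →L[ℝ] ℝ))
    (hsymm : ∀ (m : M) (ξ η : W), inn m ξ η = inn m η ξ)
    -- the pointwise dual μ* of μ with respect to the family of inner products
    (μstar : M → E')
    (hμstar : ∀ (m : M) (ξ : W), inn m (μ m) ξ = pair ξ (μstar m))
    -- the vector field X₁^ℋ, defined by d₁ℋ = ω(X₁^ℋ, −), where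
    -- (d₁ℋ)_m is the differential at m of m' ↦ ‖μ(m')‖²_m = (μ(m'), μ(m'))_m
    (X₁ : ∀ m : M, TangentSpace I m)
    (hX₁ : ∀ (m : M) (v : TangentSpace I m),
      mfderiv I 𝓘(ℝ, ℝ) (fun m' => inn m (μ m') (μ m')) m v = ω m (X₁ m) v) :
    -- conclusion: X₁^ℋ = 2 V_μ, where V_μ(m) = (μ*(m))^M_m
    ∀ m : M, X₁ m = (2 : ℝ) • mfderiv I' I (fun g : G => g • m) 1 (μstar m) := by
  intro m
  have hμ : MDifferentiableAt I 𝓘(ℝ, W) μ m := (hμsmooth m).mdifferentiableAt (by simp)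
  refine ContinuousLinearMap.eq_smul_of_forall_apply_eq_mul_of_nondegenerate (hnondeg m)
    fun v => ?_
  have hH : ω m (X₁ m) v = 2 * inn m (μ m) (mfderiv I 𝓘(ℝ, W) μ m v) := by
    rw [← hX₁, mfderiv_bilinear_diag_of_symm _ (hsymm m) hμ]
    rfl
  have hV : ω m (mfderiv I' I (fun g : G => g • m) 1 (μstar m)) v
      = pair (mfderiv I 𝓘(ℝ, W) μ m v) (μstar m) :=
    (hmom _ m v).symm.trans
      (congrArg (· v) (mfderiv_continuousLinearMap_comp (pair.flip (μstar m)) hμ))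
  rw [hH, hV]
  exact congrArg (2 * ·) (hμstar m _)

/-- Let `(M, ω)` be a symplectic manifold with a Hamiltonian `G`-action with
momentum map `μ`, and let `{(−,−)_m}` be a smooth family of inner products on `𝔤*`.  Here
`𝔤 = E'` is the Lie algebra of `G` (identified with its model space) and `𝔤* = W` is its dual,
given with the duality pairing `pair : W →L (E' →L ℝ)`.  Set `ℋ(m) = ‖μ(m)‖²_m`, let `d₁ℋ`
be the partial derivative of `(m, m') ↦ ‖μ(m)‖²_{m'}` in the first variable, and let `X₁^ℋ`
be the vector field defined by `d₁ℋ = ω(X₁^ℋ, −)`.  Let `μ* : M → 𝔤` be defined by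
`(μ(m), ξ)_m = ⟨ξ, μ*(m)⟩` for all `ξ ∈ 𝔤*`, and `V_μ(m) = (μ*(m))^M_m`.
Then `X₁^ℋ = 2 V_μ`. -/
theorem statement2
    {E : Type*} [NormedAddCommGroup E] [NormedSpace ℝ E]
    {H : Type*} [TopologicalSpace H] (I : ModelWithCorners ℝ E H)
    {M : Type*} [TopologicalSpace M] [ChartedSpace H M] [IsManifold I (⊤ : ℕ∞) M]
    {E' : Type*} [NormedAddCommGroup E'] [NormedSpace ℝ E']
    {H' : Type*} [TopologicalSpace H'] (I' : ModelWithCorners ℝ E' H')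
    {G : Type*} [TopologicalSpace G] [ChartedSpace H' G] [Group G] [LieGroup I' (⊤ : ℕ∞) G]
    [MulAction G M]
    (hact : ContMDiff (I'.prod I) I (⊤ : ℕ∞) (fun p : G × M => p.1 • p.2))
    -- 𝔤* with its duality pairing with 𝔤 = E'
    {W : Type*} [NormedAddCommGroup W] [NormedSpace ℝ W]
    (pair : W →L[ℝ] E' →L[ℝ] ℝ)
    (hpair : Function.Injective pair)
    -- the symplectic form
    (ω : ∀ m : M, TangentSpace I m →L[ℝ] TangentSpace I m →L[ℝ] ℝ)
    (hanti : ∀ (m : M) (v w : TangentSpace I m), ω m v w = - ω m w v)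
    (hnondeg : ∀ (m : M) (v : TangentSpace I m), (∀ w, ω m v w = 0) → v = 0)
    -- the momentum map and the momentum map condition dμ_X = ω(X^M, −)
    (μ : M → W)
    (hμsmooth : ContMDiff I 𝓘(ℝ, W) (⊤ : ℕ∞) μ)
    (hmom : ∀ (X : E') (m : M) (v : TangentSpace I m),
      mfderiv I 𝓘(ℝ, ℝ) (fun m' => pair (μ m') X) m v
        = ω m (mfderiv I' I (fun g : G => g • m) 1 X) v)
    -- a smooth family of inner products on 𝔤* = W, parametrized by M
    (inn : M → (W →L[ℝ] W →L[ℝ] ℝ))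
    (hinnsmooth : ContMDiff I 𝓘(ℝ, W →L[ℝ] W →L[ℝ] ℝ) (⊤ : ℕ∞) inn)
    (hsymm : ∀ (m : M) (ξ η : W), inn m ξ η = inn m η ξ)
    (hposdef : ∀ (m : M) (ξ : W), ξ ≠ 0 → 0 < inn m ξ ξ)
    -- the pointwise dual μ* of μ with respect to the family of inner products
    (μstar : M → E')
    (hμstar : ∀ (m : M) (ξ : W), inn m (μ m) ξ = pair ξ (μstar m))
    -- the vector field X₁^ℋ, defined by d₁ℋ = ω(X₁^ℋ, −), where
    -- (d₁ℋ)_m is the differential at m of m' ↦ ‖μ(m')‖²_m = (μ(m'), μ(m'))_m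
    (X₁ : ∀ m : M, TangentSpace I m)
    (hX₁ : ∀ (m : M) (v : TangentSpace I m),
      mfderiv I 𝓘(ℝ, ℝ) (fun m' => inn m (μ m') (μ m')) m v = ω m (X₁ m) v) :
    -- conclusion: X₁^ℋ = 2 V_μ, where V_μ(m) = (μ*(m))^M_m
    ∀ m : M, X₁ m = (2 : ℝ) • mfderiv I' I (fun g : G => g • m) 1 (μstar m) :=
  statement2_general I I' pair ω hnondeg μ hμsmooth hmom inn hsymm μstar hμstar X₁ hX₁
end

section
/- In the setting of a Hamiltonian G-action on (M, ω) with momentum map μ and a G-equivariant family of inner products on 𝔤* defining ℋ(m) = ‖μ(m)‖²_m, write dℋ = d₁ℋ + d₂ℋ and X^ℋ = X₁^ℋ + X₂^ℋ for the corresponding decomposition of the Hamiltonian vector field. Then for every m ∈ M, with ξ := μ(m), one has T_mμ(X₂^ℋ(m)) = −2 ad*(μ*(m)) ξ, which is tangent to the coadjoint orbit through ξ. In particular if ξ is a regular value of μ and 𝒪 = Ad*(G)ξ, then X₂^ℋ(m) ∈ T_m(μ^{-1}(𝒪)). -/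
open Manifold

/-
Pair `T_mμ(X₂^ℋ(m))` with `X ∈ 𝔤`.  The momentum condition gives `ω(X^M, X₂^ℋ) = −(d₂ℋ)(X^M)`.
Differentiating the invariance `(Ad*(g)ξ, Ad*(g)ξ)_{g·m} = (ξ, ξ)_m` at `g = 1` computes
`(d₂ℋ)(X^M) = −2⟨ad*(X)ξ, μ*(m)⟩`, and differentiating the equivariance `μ(g·m) = Ad*(g)ξ` gives
`T_mμ(Y^M) = ad*(Y)ξ`, hence `⟨ad*(Y)ξ, X⟩ = ω(X^M, Y^M)`.  Antisymmetry of `ω` then turns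
`⟨ad*(X)ξ, μ*(m)⟩` into `−⟨ad*(μ*(m))ξ, X⟩`, and the pairing `𝔤* × 𝔤 → ℝ` is nondegenerate.
-/

section MomentumMap

variable {𝕜 : Type*} [NontriviallyNormedField 𝕜]
  {E : Type*} [NormedAddCommGroup E] [NormedSpace 𝕜 E]
  {H : Type*} [TopologicalSpace H] {I : ModelWithCorners 𝕜 E H}
  {M : Type*} [TopologicalSpace M] [ChartedSpace H M]
  {E' : Type*} [NormedAddCommGroup E'] [NormedSpace 𝕜 E']
  {H' : Type*} [TopologicalSpace H'] {I' : ModelWithCorners 𝕜 E' H'}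
  {F : Type*} [NormedAddCommGroup F] [NormedSpace 𝕜 F]
  {F' : Type*} [NormedAddCommGroup F'] [NormedSpace 𝕜 F']
  {G : Type*} [TopologicalSpace G] [ChartedSpace H' G] [Monoid G] [MulAction G M]
  {W : Type*} [NormedAddCommGroup W] [NormedSpace 𝕜 W]
  {pair : W →L[𝕜] E' →L[𝕜] 𝕜} {coAd : G → W →L[𝕜] W} {μ : M → W} {m : M}
  {ω : TangentSpace I m →L[𝕜] TangentSpace I m →L[𝕜] 𝕜}

theorem ContinuousLinearMap.mfderiv_comp_apply (L : F →L[𝕜] F') {f : M → F} {x : M}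
    (hf : MDifferentiableAt I 𝓘(𝕜, F) f x) (v : TangentSpace I x) :
    mfderiv I 𝓘(𝕜, F') (fun y => L (f y)) x v = L (mfderiv I 𝓘(𝕜, F) f x v) :=
  DFunLike.congr_fun (L.hasMFDerivAt.comp x hf.hasMFDerivAt).mfderiv v

theorem mfderiv_bilinear_self_apply (B : F →L[𝕜] F →L[𝕜] F') {f : M → F} {x : M}
    (hf : MDifferentiableAt I 𝓘(𝕜, F) f x) (v : TangentSpace I x) :
    mfderiv I 𝓘(𝕜, F') (fun y => B (f y) (f y)) x v
      = B (f x) (mfderiv I 𝓘(𝕜, F) f x v) + B (mfderiv I 𝓘(𝕜, F) f x v) (f x) := by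
  have hB : HasFDerivAt (fun w => B w w) (B (f x) + B.flip (f x)) (f x) := by
    simpa using B.hasFDerivAt.clm_apply (hasFDerivAt_id (f x))
  rw [← Function.comp_def (fun w => B w w) f,
    (HasMFDerivAt.comp x hB.hasMFDerivAt hf.hasMFDerivAt).mfderiv]
  rfl

theorem mfderiv_comp_diag_apply {f : M × M → F} {a : M}
    (hf : MDifferentiableAt (I.prod I) 𝓘(𝕜, F) f (a, a)) (v : TangentSpace I a) :
    mfderiv I 𝓘(𝕜, F) (fun x => f (x, x)) a v
      = mfderiv I 𝓘(𝕜, F) (fun x => f (x, a)) a v + mfderiv I 𝓘(𝕜, F) (fun x => f (a, x)) a v := by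
  have hid : MDifferentiableAt I I (fun x : M => x) a := mdifferentiableAt_id
  have hdiag : mfderiv I (I.prod I) (fun x : M => (x, x)) a v = (v, v) := by
    rw [hid.mfderiv_prod hid, show mfderiv I I (fun x : M => x) a = .id 𝕜 _ from mfderiv_id]
    rfl
  rw [← Function.comp_def f, mfderiv_comp_apply (f := fun x : M => (x, x)) a hf (hid.prodMk hid),
    hdiag]
  exact mfderiv_prod_eq_add_apply hf

theorem mfderiv_comp_orbit_apply {f : M → F} {φ : G → F}
    (hf : MDifferentiableAt I 𝓘(𝕜, F) f m) (horb : MDifferentiableAt I' I (fun g : G => g • m) 1)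
    (hfφ : ∀ g : G, f (g • m) = φ g) (Y : E') :
    mfderiv I 𝓘(𝕜, F) f m (mfderiv I' I (fun g : G => g • m) 1 Y) = mfderiv I' 𝓘(𝕜, F) φ 1 Y := by
  have hφ : φ = f ∘ fun g : G => g • m := funext fun g => (hfφ g).symm
  rw [hφ]
  exact (mfderiv_comp_apply_of_eq 1 hf horb (one_smul G m) Y).symm

theorem pair_mfderiv_eq_of_momentum (hμ : MDifferentiableAt I 𝓘(𝕜, W) μ m)
    (hmom : ∀ (X : E') (v : TangentSpace I m), mfderiv I 𝓘(𝕜, 𝕜) (fun m' => pair (μ m') X) m v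
      = ω (mfderiv I' I (fun g : G => g • m) 1 X) v)
    (X : E') (v : TangentSpace I m) :
    pair (mfderiv I 𝓘(𝕜, W) μ m v) X = ω (mfderiv I' I (fun g : G => g • m) 1 X) v := by
  rw [← hmom]
  exact ((pair.flip X).mfderiv_comp_apply hμ v).symm

theorem pair_mfderiv_coadjoint_eq_omega (hμ : MDifferentiableAt I 𝓘(𝕜, W) μ m)
    (horb : MDifferentiableAt I' I (fun g : G => g • m) 1)
    (hμequiv : ∀ g : G, μ (g • m) = coAd g (μ m))
    (hmom : ∀ (X : E') (v : TangentSpace I m), mfderiv I 𝓘(𝕜, 𝕜) (fun m' => pair (μ m') X) m v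
      = ω (mfderiv I' I (fun g : G => g • m) 1 X) v)
    (X Y : E') :
    pair (mfderiv I' 𝓘(𝕜, W) (fun g : G => coAd g (μ m)) 1 Y) X
      = ω (mfderiv I' I (fun g : G => g • m) 1 X) (mfderiv I' I (fun g : G => g • m) 1 Y) := by
  rw [← mfderiv_comp_orbit_apply hμ horb hμequiv]
  exact pair_mfderiv_eq_of_momentum hμ hmom X _

theorem mfderiv_inner_orbit_eq_neg_two_mul {inn : M → W →L[𝕜] W →L[𝕜] 𝕜} {ξ : W}
    (hinn : MDifferentiableAt I 𝓘(𝕜, W →L[𝕜] W →L[𝕜] 𝕜) inn m)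
    (horb : MDifferentiableAt I' I (fun g : G => g • m) 1)
    (hcoAd : MDifferentiableAt I' 𝓘(𝕜, W) (fun g : G => coAd g ξ) 1)
    (hcoAd_one : coAd 1 ξ = ξ) (hsymm : ∀ η : W, inn m η ξ = inn m ξ η)
    (hinv : ∀ g : G, inn (g • m) (coAd g ξ) (coAd g ξ) = inn m ξ ξ) (X : E') :
    mfderiv I 𝓘(𝕜, 𝕜) (fun m' => inn m' ξ ξ) m (mfderiv I' I (fun g : G => g • m) 1 X)
      = -(2 * inn m ξ (mfderiv I' 𝓘(𝕜, W) (fun g : G => coAd g ξ) 1 X)) := by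
  -- `Ψ` is constant on the diagonal, so its two partial derivatives at `(1, 1)` cancel.
  set Ψ : G × G → 𝕜 := fun p => inn (p.1 • m) (coAd p.2 ξ) (coAd p.2 ξ)
  have hinnact : MDifferentiableAt I' 𝓘(𝕜, W →L[𝕜] W →L[𝕜] 𝕜) (fun g : G => inn (g • m)) 1 :=
    hinn.comp_of_eq 1 horb (one_smul G m)
  have hΨ : MDifferentiableAt (I'.prod I') 𝓘(𝕜, 𝕜) Ψ (1, 1) := by
    have h₁ := hinnact.comp ((1 : G), (1 : G)) (mdifferentiableAt_fst (I := I') (I' := I'))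
    have h₂ := hcoAd.comp ((1 : G), (1 : G)) (mdifferentiableAt_snd (I := I') (I' := I'))
    exact (h₁.clm_apply h₂).clm_apply h₂
  have hdiag : mfderiv I' 𝓘(𝕜, 𝕜) (fun g => Ψ (g, g)) 1 X = 0 := by
    have hconst : (fun g => Ψ (g, g)) = fun _ => inn m ξ ξ := funext hinv
    rw [hconst, mfderiv_const]
    rfl
  have hleft : mfderiv I' 𝓘(𝕜, 𝕜) (fun g => Ψ (g, 1)) 1 X
      = mfderiv I 𝓘(𝕜, 𝕜) (fun m' => inn m' ξ ξ) m (mfderiv I' I (fun g : G => g • m) 1 X) := by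
    have hinnξ : MDifferentiableAt I 𝓘(𝕜, 𝕜) (fun m' => inn m' ξ ξ) m :=
      (hinn.clm_apply mdifferentiableAt_const).clm_apply mdifferentiableAt_const
    have hΨ₁ : (fun g => Ψ (g, 1)) = (fun m' => inn m' ξ ξ) ∘ fun g : G => g • m := by
      funext g
      simp only [Ψ, hcoAd_one, Function.comp_apply]
    rw [hΨ₁]
    exact mfderiv_comp_apply_of_eq 1 hinnξ horb (one_smul G m) X
  have hright : mfderiv I' 𝓘(𝕜, 𝕜) (fun g => Ψ (1, g)) 1 X
      = 2 * inn m ξ (mfderiv I' 𝓘(𝕜, W) (fun g : G => coAd g ξ) 1 X) := by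
    have hΨ₂ : (fun g => Ψ (1, g)) = fun g => inn m (coAd g ξ) (coAd g ξ) := by
      funext g
      simp only [Ψ, one_smul]
    rw [hΨ₂]
    have hsymm' : ∀ η : W, inn m (coAd 1 ξ) η + inn m η (coAd 1 ξ) = 2 * inn m ξ η := by
      intro η
      rw [hcoAd_one, hsymm, two_mul]
    exact (mfderiv_bilinear_self_apply (inn m) hcoAd X).trans (hsymm' _)
  have hsum := mfderiv_comp_diag_apply hΨ X
  rw [hdiag, hleft, hright] at hsum
  exact eq_neg_of_add_eq_zero_left hsum.symm

end MomentumMap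

theorem statement3_general
    {E : Type*} [NormedAddCommGroup E] [NormedSpace ℝ E]
    {H : Type*} [TopologicalSpace H] (I : ModelWithCorners ℝ E H)
    {M : Type*} [TopologicalSpace M] [ChartedSpace H M]
    {E' : Type*} [NormedAddCommGroup E'] [NormedSpace ℝ E']
    {H' : Type*} [TopologicalSpace H'] (I' : ModelWithCorners ℝ E' H')
    {G : Type*} [TopologicalSpace G] [ChartedSpace H' G] [Group G]
    [MulAction G M]
    (hact : ContMDiff (I'.prod I) I (⊤ : ℕ∞) (fun p : G × M => p.1 • p.2))
    -- 𝔤* with its duality pairing with 𝔤 = E'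
    {W : Type*} [NormedAddCommGroup W] [NormedSpace ℝ W]
    (pair : W →L[ℝ] E' →L[ℝ] ℝ)
    (hpair : Function.Injective pair)
    -- the coadjoint action Ad* of G on 𝔤* = W
    (coAd : G → W →L[ℝ] W)
    (hcoAd_one : coAd 1 = ContinuousLinearMap.id ℝ W)
    (hcoAdsmooth : ContMDiff (I'.prod 𝓘(ℝ, W)) 𝓘(ℝ, W) (⊤ : ℕ∞) (fun p : G × W => coAd p.1 p.2))
    -- the symplectic form
    (ω : ∀ m : M, TangentSpace I m →L[ℝ] TangentSpace I m →L[ℝ] ℝ)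
    (hanti : ∀ (m : M) (v w : TangentSpace I m), ω m v w = - ω m w v)
    -- the momentum map: smooth, equivariant, satisfying dμ_X = ω(X^M, −)
    (μ : M → W)
    (hμsmooth : ContMDiff I 𝓘(ℝ, W) (⊤ : ℕ∞) μ)
    (hμequiv : ∀ (g : G) (m : M), μ (g • m) = coAd g (μ m))
    (hmom : ∀ (X : E') (m : M) (v : TangentSpace I m),
      mfderiv I 𝓘(ℝ, ℝ) (fun m' => pair (μ m') X) m v
        = ω m (mfderiv I' I (fun g : G => g • m) 1 X) v)
    -- a smooth G-equivariant family of inner products on 𝔤* = W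
    (inn : M → (W →L[ℝ] W →L[ℝ] ℝ))
    (hinnsmooth : ContMDiff I 𝓘(ℝ, W →L[ℝ] W →L[ℝ] ℝ) (⊤ : ℕ∞) inn)
    (hsymm : ∀ (m : M) (ξ η : W), inn m ξ η = inn m η ξ)
    (hequivar : ∀ (g : G) (m : M) (ξ η : W),
      inn (g • m) (coAd g ξ) (coAd g η) = inn m ξ η)
    -- the pointwise dual μ* of μ with respect to the family of inner products
    (μstar : M → E')
    (hμstar : ∀ (m : M) (ξ : W), inn m (μ m) ξ = pair ξ (μstar m))
    -- the vector field X₂^ℋ, defined by d₂ℋ = ω(X₂^ℋ, −), where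
    -- (d₂ℋ)_m is the differential at m of m' ↦ ‖μ(m)‖²_{m'} = (μ(m), μ(m))_{m'}
    (X₂ : ∀ m : M, TangentSpace I m)
    (hX₂ : ∀ (m : M) (v : TangentSpace I m),
      mfderiv I 𝓘(ℝ, ℝ) (fun m' => inn m' (μ m) (μ m)) m v = ω m (X₂ m) v) :
    ∀ m : M,
      -- T_mμ(X₂^ℋ(m)) = −2 ad*(μ*(m)) (μ m), where ad*(X)ξ = T₁(g ↦ Ad*(g)ξ)(X) ...
      mfderiv I 𝓘(ℝ, W) μ m (X₂ m)
          = (-2 : ℝ) • mfderiv I' 𝓘(ℝ, W) (fun g : G => coAd g (μ m)) 1 (μstar m)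
      -- ... which lies in the tangent space {ad*(X)(μ m) : X ∈ 𝔤} at μ(m) to the coadjoint
      -- orbit through μ(m); in particular (if μ(m) is a regular value of μ, under the
      -- identification T_m(μ⁻¹𝒪) = (T_mμ)⁻¹(T_{μ(m)}𝒪)) X₂^ℋ(m) is tangent to μ⁻¹(𝒪).
      ∧ mfderiv I 𝓘(ℝ, W) μ m (X₂ m)
          ∈ Set.range (fun X : E' => mfderiv I' 𝓘(ℝ, W) (fun g : G => coAd g (μ m)) 1 X) := by
  intro m
  have hμ : MDifferentiableAt I 𝓘(ℝ, W) μ m := hμsmooth.mdifferentiableAt (by simp)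
  have horb : MDifferentiableAt I' I (fun g : G => g • m) 1 :=
    (hact.comp (contMDiff_id.prodMk contMDiff_const)).mdifferentiableAt (by simp)
  have hcoAd : MDifferentiableAt I' 𝓘(ℝ, W) (fun g : G => coAd g (μ m)) 1 :=
    (hcoAdsmooth.comp (contMDiff_id.prodMk contMDiff_const)).mdifferentiableAt (by simp)
  have hinn : MDifferentiableAt I 𝓘(ℝ, W →L[ℝ] W →L[ℝ] ℝ) inn m :=
    hinnsmooth.mdifferentiableAt (by simp)
  have hpairing : ∀ X : E', pair (mfderiv I 𝓘(ℝ, W) μ m (X₂ m)) X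
      = pair ((-2 : ℝ) • mfderiv I' 𝓘(ℝ, W) (fun g : G => coAd g (μ m)) 1 (μstar m)) X := by
    intro X
    have hinv : ω m (X₂ m) (mfderiv I' I (fun g : G => g • m) 1 X)
        = -(2 * inn m (μ m) (mfderiv I' 𝓘(ℝ, W) (fun g : G => coAd g (μ m)) 1 X)) :=
      (hX₂ m _).symm.trans (mfderiv_inner_orbit_eq_neg_two_mul hinn horb hcoAd
        (DFunLike.congr_fun hcoAd_one (μ m)) (hsymm m · (μ m)) (hequivar · m (μ m) (μ m)) X)
    have hcoadj := pair_mfderiv_coadjoint_eq_omega hμ horb (hμequiv · m) (hmom · m)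
    calc pair (mfderiv I 𝓘(ℝ, W) μ m (X₂ m)) X
        = ω m (mfderiv I' I (fun g : G => g • m) 1 X) (X₂ m) :=
          pair_mfderiv_eq_of_momentum hμ (hmom · m) X _
      _ = 2 * pair (mfderiv I' 𝓘(ℝ, W) (fun g : G => coAd g (μ m)) 1 X) (μstar m) := by
          linear_combination hanti m (mfderiv I' I (fun g : G => g • m) 1 X) (X₂ m) - hinv
            + 2 * hμstar m (mfderiv I' 𝓘(ℝ, W) (fun g : G => coAd g (μ m)) 1 X)
      _ = -2 * pair (mfderiv I' 𝓘(ℝ, W) (fun g : G => coAd g (μ m)) 1 (μstar m)) X := by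
          linear_combination 2 * hcoadj (μstar m) X + 2 * hanti m
            (mfderiv I' I (fun g : G => g • m) 1 (μstar m)) (mfderiv I' I (fun g : G => g • m) 1 X)
            + 2 * hcoadj X (μstar m)
      _ = _ := (congrArg (· X) (pair.map_smul (-2 : ℝ) _)).symm
  have hX₂image := hpair (ContinuousLinearMap.ext hpairing)
  exact ⟨hX₂image, (-2 : ℝ) • μstar m, (ContinuousLinearMap.map_smul _ _ _).trans hX₂image.symm⟩

/-- Hamiltonian `G`-action on `(M, ω)` with equivariant momentum map `μ` and a
`G`-equivariant family of inner products on `𝔤*`, defining `ℋ(m) = ‖μ(m)‖²_m`.  Writing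
`dℋ = d₁ℋ + d₂ℋ` and `X^ℋ = X₁^ℋ + X₂^ℋ` for the corresponding decomposition of the
Hamiltonian vector field, one has, for every `m` and `ξ := μ(m)`:
`T_mμ(X₂^ℋ(m)) = −2 ad*(μ*(m)) ξ`, which is tangent to the coadjoint orbit through `ξ`
(here `ad*(X)ξ` is the derivative at `1 ∈ G` of `g ↦ Ad*(g)ξ` in the direction `X`, and the
tangent space at `ξ` to the coadjoint orbit is `{ad*(X)ξ : X ∈ 𝔤}`).  In particular, under
their identification `T_m(μ⁻¹(𝒪)) = (T_mμ)⁻¹(T_ξ𝒪)`, if `ξ` is a regular value of `μ` then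
`X₂^ℋ(m) ∈ T_m(μ⁻¹(𝒪))`, i.e. `T_mμ(X₂^ℋ(m)) ∈ T_ξ𝒪`. -/
theorem statement3
    {E : Type*} [NormedAddCommGroup E] [NormedSpace ℝ E]
    {H : Type*} [TopologicalSpace H] (I : ModelWithCorners ℝ E H)
    {M : Type*} [TopologicalSpace M] [ChartedSpace H M] [IsManifold I (⊤ : ℕ∞) M]
    {E' : Type*} [NormedAddCommGroup E'] [NormedSpace ℝ E']
    {H' : Type*} [TopologicalSpace H'] (I' : ModelWithCorners ℝ E' H')
    {G : Type*} [TopologicalSpace G] [ChartedSpace H' G] [Group G] [LieGroup I' (⊤ : ℕ∞) G]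
    [MulAction G M]
    (hact : ContMDiff (I'.prod I) I (⊤ : ℕ∞) (fun p : G × M => p.1 • p.2))
    -- 𝔤* with its duality pairing with 𝔤 = E'
    {W : Type*} [NormedAddCommGroup W] [NormedSpace ℝ W]
    (pair : W →L[ℝ] E' →L[ℝ] ℝ)
    (hpair : Function.Injective pair)
    -- the coadjoint action Ad* of G on 𝔤* = W
    (coAd : G → W →L[ℝ] W)
    (hcoAd_one : coAd 1 = ContinuousLinearMap.id ℝ W)
    (hcoAd_mul : ∀ g g' : G, coAd (g * g') = (coAd g).comp (coAd g'))
    (hcoAdsmooth : ContMDiff (I'.prod 𝓘(ℝ, W)) 𝓘(ℝ, W) (⊤ : ℕ∞) (fun p : G × W => coAd p.1 p.2))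
    -- the symplectic form
    (ω : ∀ m : M, TangentSpace I m →L[ℝ] TangentSpace I m →L[ℝ] ℝ)
    (hanti : ∀ (m : M) (v w : TangentSpace I m), ω m v w = - ω m w v)
    (hnondeg : ∀ (m : M) (v : TangentSpace I m), (∀ w, ω m v w = 0) → v = 0)
    -- the momentum map: smooth, equivariant, satisfying dμ_X = ω(X^M, −)
    (μ : M → W)
    (hμsmooth : ContMDiff I 𝓘(ℝ, W) (⊤ : ℕ∞) μ)
    (hμequiv : ∀ (g : G) (m : M), μ (g • m) = coAd g (μ m))
    (hmom : ∀ (X : E') (m : M) (v : TangentSpace I m),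
      mfderiv I 𝓘(ℝ, ℝ) (fun m' => pair (μ m') X) m v
        = ω m (mfderiv I' I (fun g : G => g • m) 1 X) v)
    -- a smooth G-equivariant family of inner products on 𝔤* = W
    (inn : M → (W →L[ℝ] W →L[ℝ] ℝ))
    (hinnsmooth : ContMDiff I 𝓘(ℝ, W →L[ℝ] W →L[ℝ] ℝ) (⊤ : ℕ∞) inn)
    (hsymm : ∀ (m : M) (ξ η : W), inn m ξ η = inn m η ξ)
    (hposdef : ∀ (m : M) (ξ : W), ξ ≠ 0 → 0 < inn m ξ ξ)
    (hequivar : ∀ (g : G) (m : M) (ξ η : W),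
      inn (g • m) (coAd g ξ) (coAd g η) = inn m ξ η)
    -- the pointwise dual μ* of μ with respect to the family of inner products
    (μstar : M → E')
    (hμstar : ∀ (m : M) (ξ : W), inn m (μ m) ξ = pair ξ (μstar m))
    -- the vector field X₂^ℋ, defined by d₂ℋ = ω(X₂^ℋ, −), where
    -- (d₂ℋ)_m is the differential at m of m' ↦ ‖μ(m)‖²_{m'} = (μ(m), μ(m))_{m'}
    (X₂ : ∀ m : M, TangentSpace I m)
    (hX₂ : ∀ (m : M) (v : TangentSpace I m),
      mfderiv I 𝓘(ℝ, ℝ) (fun m' => inn m' (μ m) (μ m)) m v = ω m (X₂ m) v) :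
    ∀ m : M,
      -- T_mμ(X₂^ℋ(m)) = −2 ad*(μ*(m)) (μ m), where ad*(X)ξ = T₁(g ↦ Ad*(g)ξ)(X) ...
      mfderiv I 𝓘(ℝ, W) μ m (X₂ m)
          = (-2 : ℝ) • mfderiv I' 𝓘(ℝ, W) (fun g : G => coAd g (μ m)) 1 (μstar m)
      -- ... which lies in the tangent space {ad*(X)(μ m) : X ∈ 𝔤} at μ(m) to the coadjoint
      -- orbit through μ(m); in particular (if μ(m) is a regular value of μ, under the
      -- identification T_m(μ⁻¹𝒪) = (T_mμ)⁻¹(T_{μ(m)}𝒪)) X₂^ℋ(m) is tangent to μ⁻¹(𝒪).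
      ∧ mfderiv I 𝓘(ℝ, W) μ m (X₂ m)
          ∈ Set.range (fun X : E' => mfderiv I' 𝓘(ℝ, W) (fun g : G => coAd g (μ m)) 1 X) :=
  statement3_general I I' hact pair hpair coAd hcoAd_one hcoAdsmooth ω hanti μ hμsmooth hμequiv hmom
    inn hinnsmooth hsymm hequivar μstar hμstar X₂ hX₂
end

section
/- Let (M, ω) be symplectic with Hamiltonian G-action, μ the momentum map, a family of inner products on 𝔤* with orthonormal frame h_j, dual frame h_j* of M × 𝔤 and μ_j = ⟨μ, h_j*⟩ the components of μ. Then the gradient of μ_j with respect to the metric ω(−, J−) satisfies grad μ_j = J V_j + ⟨μ, Th_j*⟩*, where V_j(m) = (h_j*(m))^M_m, ⟨μ, Th_j*⟩ is the one-form m ↦ (v ↦ ⟨μ(m), T_m h_j*(v)⟩), and * denotes the metric dual vector field. -/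
/-!
By the product rule, `dμ_j = ⟨dμ, h_j*(m)⟩ + ⟨μ, Th_j*⟩`. With `h_j*(m)` frozen, the first term is
`ω(V_j, −)` by the momentum map equation, and `ω(V_j, −) = g(J V_j, −)` because `J` preserves `ω`.
Nondegeneracy of `g` then identifies `grad μ_j` with `J V_j + ⟨μ, Th_j*⟩*`.
-/

open Manifold

section CompatibleTriple

variable {𝕜 V : Type*} [NormedField 𝕜]
  [TopologicalSpace V] [AddCommGroup V] [Module 𝕜 V]
  {ω : V →L[𝕜] V →L[𝕜] 𝕜} {J : V →L[𝕜] V}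

theorem apply_J_J_of_compatible (hanti : ∀ v w : V, ω v w = -ω w v) (hJ2 : ∀ v : V, J (J v) = -v)
    (hgsymm : ∀ v w : V, ω v (J w) = ω w (J v)) (v w : V) :
    ω (J v) (J w) = ω v w := by
  rw [hgsymm, hJ2, map_neg, hanti, neg_neg]

theorem eq_of_forall_apply_J_eq (hnondeg : ∀ v : V, (∀ w, ω v w = 0) → v = 0)
    (hJ2 : ∀ v : V, J (J v) = -v) {a b : V} (h : ∀ v : V, ω a (J v) = ω b (J v)) : a = b := by
  refine sub_eq_zero.mp (hnondeg _ fun w => ?_)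
  have hw : J (-J w) = w := by rw [map_neg, hJ2, neg_neg]
  rw [map_sub, sub_apply, ← hw, h, sub_self]

/-- The dual, for the metric `ω(-, J-)`, of the one-form `ω(X, -)` is `J X`. -/
theorem eq_J_add_of_forall_apply_J (hanti : ∀ v w : V, ω v w = -ω w v)
    (hJ2 : ∀ v : V, J (J v) = -v)
    (hgsymm : ∀ v w : V, ω v (J w) = ω w (J v)) (hnondeg : ∀ v : V, (∀ w, ω v w = 0) → v = 0)
    {grad X α : V} (h : ∀ v : V, ω grad (J v) = ω X v + ω α (J v)) : grad = J X + α := by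
  refine eq_of_forall_apply_J_eq hnondeg hJ2 fun v => ?_
  rw [h, map_add, add_apply, apply_J_J_of_compatible hanti hJ2 hgsymm]

end CompatibleTriple

section BilinearPairing

variable {𝕜 : Type*} [NontriviallyNormedField 𝕜]
  {E : Type*} [NormedAddCommGroup E] [NormedSpace 𝕜 E]
  {H : Type*} [TopologicalSpace H] {I : ModelWithCorners 𝕜 E H}
  {M : Type*} [TopologicalSpace M] [ChartedSpace H M]
  {F₁ F₂ F₃ : Type*} [NormedAddCommGroup F₁] [NormedSpace 𝕜 F₁]
  [NormedAddCommGroup F₂] [NormedSpace 𝕜 F₂] [NormedAddCommGroup F₃] [NormedSpace 𝕜 F₃]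
  (B : F₁ →L[𝕜] F₂ →L[𝕜] F₃) {f : M → F₁} {x : M}

theorem ContinuousLinearMap.mfderiv_of_bilinear_apply {g : M → F₂}
    (hf : MDifferentiableAt I 𝓘(𝕜, F₁) f x) (hg : MDifferentiableAt I 𝓘(𝕜, F₂) g x)
    (v : TangentSpace I x) :
    mfderiv I 𝓘(𝕜, F₃) (fun y => B (f y) (g y)) x v
      = B (mfderiv I 𝓘(𝕜, F₁) f x v) (g x) + B (f x) (mfderiv I 𝓘(𝕜, F₂) g x v) := by
  have hB : MDifferentiableAt 𝓘(𝕜, F₁ × F₂) 𝓘(𝕜, F₃) (fun p : F₁ × F₂ => B p.1 p.2)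
      (f x, g x) :=
    (B.isBoundedBilinearMap.differentiableAt _).mdifferentiableAt
  have hprod : mfderiv I 𝓘(𝕜, F₁ × F₂) (fun y => (f y, g y)) x
      = (mfderiv I 𝓘(𝕜, F₁) f x).prod (mfderiv I 𝓘(𝕜, F₂) g x) := by
    rw [modelWithCornersSelf_prod, ← chartedSpaceSelf_prod]
    exact hf.mfderiv_prod hg
  change mfderiv I 𝓘(𝕜, F₃) ((fun p : F₁ × F₂ => B p.1 p.2) ∘ fun y => (f y, g y)) x v = _
  rw [mfderiv_comp x hB (hf.prodMk_space hg), hprod, mfderiv_eq_fderiv,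
    B.isBoundedBilinearMap.fderiv]
  exact add_comm _ _

theorem ContinuousLinearMap.mfderiv_apply_const_apply
    (hf : MDifferentiableAt I 𝓘(𝕜, F₁) f x) (c : F₂) (v : TangentSpace I x) :
    mfderiv I 𝓘(𝕜, F₃) (fun y => B (f y) c) x v = B (mfderiv I 𝓘(𝕜, F₁) f x v) c := by
  rw [B.mfderiv_of_bilinear_apply hf mdifferentiableAt_const, mfderiv_const, zero_apply]
  exact add_eq_left.mpr (map_zero _)

end BilinearPairing

theorem statement17_general
    {E : Type*} [NormedAddCommGroup E] [NormedSpace ℝ E]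
    {H : Type*} [TopologicalSpace H] (I : ModelWithCorners ℝ E H)
    {M : Type*} [TopologicalSpace M] [ChartedSpace H M]
    {E' : Type*} [NormedAddCommGroup E'] [NormedSpace ℝ E']
    {H' : Type*} [TopologicalSpace H'] (I' : ModelWithCorners ℝ E' H')
    {G : Type*} [TopologicalSpace G] [ChartedSpace H' G] [Group G]
    [MulAction G M]
    -- 𝔤* with its duality pairing with 𝔤 = E'
    {W : Type*} [NormedAddCommGroup W] [NormedSpace ℝ W]
    (pair : W →L[ℝ] E' →L[ℝ] ℝ)
    -- the symplectic form ω and a compatible almost complex structure J;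
    -- g := ω(−, J−) is a Riemannian metric
    (ω : ∀ m : M, TangentSpace I m →L[ℝ] TangentSpace I m →L[ℝ] ℝ)
    (hanti : ∀ (m : M) (v w : TangentSpace I m), ω m v w = - ω m w v)
    (hnondeg : ∀ (m : M) (v : TangentSpace I m), (∀ w, ω m v w = 0) → v = 0)
    (J : ∀ m : M, TangentSpace I m →L[ℝ] TangentSpace I m)
    (hJ2 : ∀ (m : M) (v : TangentSpace I m), J m (J m v) = -v)
    (hgsymm : ∀ (m : M) (v w : TangentSpace I m), ω m v (J m w) = ω m w (J m v))
    -- the momentum map, satisfying dμ_X = ω(X^M, −)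
    (μ : M → W)
    (hμsmooth : ContMDiff I 𝓘(ℝ, W) (⊤ : ℕ∞) μ)
    (hmom : ∀ (X : E') (m : M) (v : TangentSpace I m),
      mfderiv I 𝓘(ℝ, ℝ) (fun m' => pair (μ m') X) m v
        = ω m (mfderiv I' I (fun g : G => g • m) 1 X) v)
    -- the family of inner products, the frame element h_j and its dual h_j*
    (hstar : M → E')
    (hhstarsmooth : ContMDiff I 𝓘(ℝ, E') (⊤ : ℕ∞) hstar)
    -- the component μ_j = ⟨μ, h_j*⟩
    (μj : M → ℝ) (hμj : ∀ m, μj m = pair (μ m) (hstar m))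
    -- grad μ_j, defined by g(grad μ_j, −) = dμ_j
    (gradμj : ∀ m : M, TangentSpace I m)
    (hgrad : ∀ (m : M) (v : TangentSpace I m),
      mfderiv I 𝓘(ℝ, ℝ) μj m v = ω m (gradμj m) (J m v))
    -- the metric dual ⟨μ, Th_j*⟩* of the one-form ⟨μ, Th_j*⟩ : v ↦ ⟨μ(m), T_m h_j*(v)⟩
    (αstar : ∀ m : M, TangentSpace I m)
    (hαstar : ∀ (m : M) (v : TangentSpace I m),
      pair (μ m) (mfderiv I 𝓘(ℝ, E') hstar m v) = ω m (αstar m) (J m v)) :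
    -- conclusion: grad μ_j = J V_j + ⟨μ, Th_j*⟩*, with V_j(m) = (h_j*(m))^M_m
    ∀ m : M,
      gradμj m = J m (mfderiv I' I (fun g : G => g • m) 1 (hstar m)) + αstar m := by
  intro m
  have hμ : MDifferentiableAt I 𝓘(ℝ, W) μ m := hμsmooth.mdifferentiableAt (by simp)
  have hh : MDifferentiableAt I 𝓘(ℝ, E') hstar m := hhstarsmooth.mdifferentiableAt (by simp)
  refine eq_J_add_of_forall_apply_J (hanti m) (hJ2 m) (hgsymm m) (hnondeg m) fun v => ?_
  rw [← hgrad, ← hαstar, ← hmom, pair.mfderiv_apply_const_apply hμ, funext hμj,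
    pair.mfderiv_of_bilinear_apply hμ hh]

/-- Let `(M, ω)` be symplectic with Hamiltonian `G`-action, `μ` the momentum
map, a family of inner products on `𝔤*` with orthonormal frame element `h_j`, dual frame
element `h_j* : M → 𝔤` (so that `(h_j(m), ξ)_m = ⟨ξ, h_j*(m)⟩`), and `μ_j = ⟨μ, h_j*⟩`.
Let `J` be an `ω`-compatible almost complex structure, so that `g = ω(−, J−)` is a Riemannian
metric.  Then the gradient of `μ_j` with respect to `g` satisfies
`grad μ_j = J V_j + ⟨μ, Th_j*⟩*`,
where `V_j(m) = (h_j*(m))^M_m`, `⟨μ, Th_j*⟩` is the one-form `v ↦ ⟨μ(m), T_m h_j*(v)⟩`, and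
`*` denotes the metric dual vector field. -/
theorem statement17
    {E : Type*} [NormedAddCommGroup E] [NormedSpace ℝ E]
    {H : Type*} [TopologicalSpace H] (I : ModelWithCorners ℝ E H)
    {M : Type*} [TopologicalSpace M] [ChartedSpace H M] [IsManifold I (⊤ : ℕ∞) M]
    {E' : Type*} [NormedAddCommGroup E'] [NormedSpace ℝ E']
    {H' : Type*} [TopologicalSpace H'] (I' : ModelWithCorners ℝ E' H')
    {G : Type*} [TopologicalSpace G] [ChartedSpace H' G] [Group G] [LieGroup I' (⊤ : ℕ∞) G]
    [MulAction G M]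
    (hact : ContMDiff (I'.prod I) I (⊤ : ℕ∞) (fun p : G × M => p.1 • p.2))
    -- 𝔤* with its duality pairing with 𝔤 = E'
    {W : Type*} [NormedAddCommGroup W] [NormedSpace ℝ W]
    (pair : W →L[ℝ] E' →L[ℝ] ℝ)
    (hpair : Function.Injective pair)
    -- the symplectic form ω and a compatible almost complex structure J;
    -- g := ω(−, J−) is a Riemannian metric
    (ω : ∀ m : M, TangentSpace I m →L[ℝ] TangentSpace I m →L[ℝ] ℝ)
    (hanti : ∀ (m : M) (v w : TangentSpace I m), ω m v w = - ω m w v)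
    (hnondeg : ∀ (m : M) (v : TangentSpace I m), (∀ w, ω m v w = 0) → v = 0)
    (J : ∀ m : M, TangentSpace I m →L[ℝ] TangentSpace I m)
    (hJ2 : ∀ (m : M) (v : TangentSpace I m), J m (J m v) = -v)
    (hgsymm : ∀ (m : M) (v w : TangentSpace I m), ω m v (J m w) = ω m w (J m v))
    (hgpos : ∀ (m : M) (v : TangentSpace I m), v ≠ 0 → 0 < ω m v (J m v))
    -- the momentum map, satisfying dμ_X = ω(X^M, −)
    (μ : M → W)
    (hμsmooth : ContMDiff I 𝓘(ℝ, W) (⊤ : ℕ∞) μ)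
    (hmom : ∀ (X : E') (m : M) (v : TangentSpace I m),
      mfderiv I 𝓘(ℝ, ℝ) (fun m' => pair (μ m') X) m v
        = ω m (mfderiv I' I (fun g : G => g • m) 1 X) v)
    -- the family of inner products, the frame element h_j and its dual h_j*
    (inn : M → (W →L[ℝ] W →L[ℝ] ℝ))
    (hsymm : ∀ (m : M) (ξ η : W), inn m ξ η = inn m η ξ)
    (hposdef : ∀ (m : M) (ξ : W), ξ ≠ 0 → 0 < inn m ξ ξ)
    (h : M → W) (hstar : M → E')
    (hhsmooth : ContMDiff I 𝓘(ℝ, W) (⊤ : ℕ∞) h) (hhstarsmooth : ContMDiff I 𝓘(ℝ, E') (⊤ : ℕ∞) hstar)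
    (hhstar : ∀ (m : M) (ξ : W), inn m (h m) ξ = pair ξ (hstar m))
    -- the component μ_j = ⟨μ, h_j*⟩
    (μj : M → ℝ) (hμj : ∀ m, μj m = pair (μ m) (hstar m))
    -- grad μ_j, defined by g(grad μ_j, −) = dμ_j
    (gradμj : ∀ m : M, TangentSpace I m)
    (hgrad : ∀ (m : M) (v : TangentSpace I m),
      mfderiv I 𝓘(ℝ, ℝ) μj m v = ω m (gradμj m) (J m v))
    -- the metric dual ⟨μ, Th_j*⟩* of the one-form ⟨μ, Th_j*⟩ : v ↦ ⟨μ(m), T_m h_j*(v)⟩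
    (αstar : ∀ m : M, TangentSpace I m)
    (hαstar : ∀ (m : M) (v : TangentSpace I m),
      pair (μ m) (mfderiv I 𝓘(ℝ, E') hstar m v) = ω m (αstar m) (J m v)) :
    -- conclusion: grad μ_j = J V_j + ⟨μ, Th_j*⟩*, with V_j(m) = (h_j*(m))^M_m
    ∀ m : M,
      gradμj m = J m (mfderiv I' I (fun g : G => g • m) 1 (hstar m)) + αstar m :=
  statement17_general I I' pair ω hanti hnondeg J hJ2 hgsymm μ hμsmooth hmom hstar hhstarsmooth μj
    hμj gradμj hgrad αstar hαstar
end
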